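/- Let (U, A, η, a) with twist constant K be a smooth areal solution on [R₀,R*). Then for every R ∈ [R₀,R*) and every θ: (i) a(R,θ) ≤ sup_{θ'} a(R₀,θ'); and (ii) (1/(2R)) ∫₀^{2π} |∂_R (1/a)(R,θ)| dθ ≤ 𝓔_K(R₀). -/

import Mathlib

open Real

noncomputable section

/-- Partial derivative in the first (areal time `R`) variable. -/
def pd1 (f : ℝ → ℝ → ℝ) (x y : ℝ) : ℝ := deriv (fun s => f s y) x

/-- Partial derivative in the second (space `θ`) variable. -/
def pd2 (f : ℝ → ℝ → ℝ) (x y : ℝ) : ℝ := deriv (fun s => f x s) y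

/-- The energy density `E := a⁻¹ U_R² + a U_θ² + (e^{4U}/(4R²))(a⁻¹ A_R² + a A_θ²)`. -/
def Edens (U A a : ℝ → ℝ → ℝ) (r θ : ℝ) : ℝ :=
  (a r θ)⁻¹ * (pd1 U r θ) ^ 2 + a r θ * (pd2 U r θ) ^ 2
    + exp (4 * U r θ) / (4 * r ^ 2) *
        ((a r θ)⁻¹ * (pd1 A r θ) ^ 2 + a r θ * (pd2 A r θ) ^ 2)

/-- The flux density `F := 2 U_R U_θ + (e^{4U}/(2R²)) A_R A_θ`. -/
def Fdens (U A : ℝ → ℝ → ℝ) (r θ : ℝ) : ℝ :=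
  2 * pd1 U r θ * pd2 U r θ
    + exp (4 * U r θ) / (2 * r ^ 2) * (pd1 A r θ * pd2 A r θ)

/-- A smooth solution `(U, A, η, a)` of the `T²`-symmetric vacuum Einstein equations
in areal coordinates, with twist constant `K`, on the time set `D` (times `ℝ` in the
space variable `θ`, with all coefficients `2π`-periodic in `θ` and `a > 0`).
The equations are (A1), (A2), (A3) and the constraints (A4) of the paper. -/
structure ArealSol (D : Set ℝ) (K : ℝ) where
  U : ℝ → ℝ → ℝ
  A : ℝ → ℝ → ℝ
  η : ℝ → ℝ → ℝ
  a : ℝ → ℝ → ℝ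
  smooth_U : ContDiff ℝ (⊤ : ℕ∞) (Function.uncurry U)
  smooth_A : ContDiff ℝ (⊤ : ℕ∞) (Function.uncurry A)
  smooth_η : ContDiff ℝ (⊤ : ℕ∞) (Function.uncurry η)
  smooth_a : ContDiff ℝ (⊤ : ℕ∞) (Function.uncurry a)
  periodic_U : ∀ r θ : ℝ, U r (θ + 2 * π) = U r θ
  periodic_A : ∀ r θ : ℝ, A r (θ + 2 * π) = A r θ
  periodic_η : ∀ r θ : ℝ, η r (θ + 2 * π) = η r θ
  periodic_a : ∀ r θ : ℝ, a r (θ + 2 * π) = a r θ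
  apos : ∀ r ∈ D, ∀ θ : ℝ, 0 < a r θ
  eq_U : ∀ r ∈ D, ∀ θ : ℝ,
    pd1 (fun r' θ' => r' * (a r' θ')⁻¹ * pd1 U r' θ') r θ
      - pd2 (fun r' θ' => r' * a r' θ' * pd2 U r' θ') r θ
      = exp (4 * U r θ) / (2 * r) *
          ((a r θ)⁻¹ * (pd1 A r θ) ^ 2 - a r θ * (pd2 A r θ) ^ 2)
  eq_A : ∀ r ∈ D, ∀ θ : ℝ,
    pd1 (fun r' θ' => r'⁻¹ * (a r' θ')⁻¹ * pd1 A r' θ') r θ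
      - pd2 (fun r' θ' => r'⁻¹ * a r' θ' * pd2 A r' θ') r θ
      = (4 / r) * (a r θ * pd2 U r θ * pd2 A r θ - (a r θ)⁻¹ * pd1 U r θ * pd1 A r θ)
  eq_a : ∀ r ∈ D, ∀ θ : ℝ,
    pd1 (fun r' θ' => Real.log (a r' θ')) r θ
      = -(K ^ 2 * exp (2 * η r θ)) / (2 * r ^ 3)
  eq_ηR : ∀ r ∈ D, ∀ θ : ℝ,
    pd1 η r θ + K ^ 2 / (4 * r ^ 3) * exp (2 * η r θ) = a r θ * r * Edens U A a r θ
  eq_ηθ : ∀ r ∈ D, ∀ θ : ℝ,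
    pd2 η r θ = r * Fdens U A r θ

/-- The areal energy `𝓔(R)`. -/
def En (U A a : ℝ → ℝ → ℝ) (r : ℝ) : ℝ :=
  ∫ θ in (0:ℝ)..(2 * π), Edens U A a r θ

/-- The modified areal energy `𝓔_K(R)`. -/
def EnK (K : ℝ) (U A η a : ℝ → ℝ → ℝ) (r : ℝ) : ℝ :=
  ∫ θ in (0:ℝ)..(2 * π),
    (Edens U A a r θ + K ^ 2 / (4 * r ^ 4) * exp (2 * η r θ) * (a r θ)⁻¹)

end

/-!
By (A3), `∂_R a = -(K² e^{2η} / (2R³)) a ≤ 0`, so `a` decreases in `R`, which gives (i). The same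
equation shows `|∂_R(1/a)| / (2R) = (K² / (4R⁴)) e^{2η} a⁻¹`, the twist part of the integrand of
`𝓔_K`, so the left side of (ii) is at most `𝓔_K(R) ≤ 𝓔_K(R₀)`.

Monotonicity of `𝓔_K` comes from the pointwise energy identity
`∂_R e_K = R⁻² ∂_θ(R² a F) - D` with `D ≥ 0`, obtained by combining (A1) times `U_R`,
(A2) times `A_R` and the constraint (A4) for `η_R`; integrating over a period removes the flux
term, and Fubini turns the pointwise identity into `𝓔_K(R₁) - 𝓔_K(R₀) = -∫∫ D ≤ 0`.
-/

open Function Set MeasureTheory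

namespace ContDiff

variable {f : ℝ → ℝ → ℝ}

theorem pd1_eq_fderiv (hf : ContDiff ℝ (⊤ : ℕ∞) (uncurry f)) (x y : ℝ) :
    pd1 f x y = fderiv ℝ (uncurry f) (x, y) (1, 0) := by
  have h := (hf.differentiable (by simp) (x, y)).hasFDerivAt.comp_hasDerivAt x
    ((hasDerivAt_id x).prodMk (hasDerivAt_const x y))
  exact h.deriv

theorem pd2_eq_fderiv (hf : ContDiff ℝ (⊤ : ℕ∞) (uncurry f)) (x y : ℝ) :
    pd2 f x y = fderiv ℝ (uncurry f) (x, y) (0, 1) := by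
  have h := (hf.differentiable (by simp) (x, y)).hasFDerivAt.comp_hasDerivAt y
    ((hasDerivAt_const y x).prodMk (hasDerivAt_id y))
  exact h.deriv

theorem hasDerivAt_pd1 (hf : ContDiff ℝ (⊤ : ℕ∞) (uncurry f)) (x y : ℝ) :
    HasDerivAt (fun s => f s y) (pd1 f x y) x :=
  ((hf.differentiable (by simp)).comp (differentiable_id.prodMk (differentiable_const y))
    x).hasDerivAt

theorem hasDerivAt_pd2 (hf : ContDiff ℝ (⊤ : ℕ∞) (uncurry f)) (x y : ℝ) :
    HasDerivAt (fun t => f x t) (pd2 f x y) y :=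
  ((hf.differentiable (by simp)).comp ((differentiable_const x).prodMk differentiable_id)
    y).hasDerivAt

theorem uncurry_pd1 (hf : ContDiff ℝ (⊤ : ℕ∞) (uncurry f)) :
    ContDiff ℝ (⊤ : ℕ∞) (uncurry (pd1 f)) := by
  have : uncurry (pd1 f) = fun p => fderiv ℝ (uncurry f) p (1, 0) :=
    funext fun p => hf.pd1_eq_fderiv p.1 p.2
  rw [this]
  exact (hf.fderiv_right (by exact_mod_cast le_top)).clm_apply contDiff_const

theorem uncurry_pd2 (hf : ContDiff ℝ (⊤ : ℕ∞) (uncurry f)) :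
    ContDiff ℝ (⊤ : ℕ∞) (uncurry (pd2 f)) := by
  have : uncurry (pd2 f) = fun p => fderiv ℝ (uncurry f) p (0, 1) :=
    funext fun p => hf.pd2_eq_fderiv p.1 p.2
  rw [this]
  exact (hf.fderiv_right (by exact_mod_cast le_top)).clm_apply contDiff_const

theorem pd1_pd2_comm (hf : ContDiff ℝ (⊤ : ℕ∞) (uncurry f)) (x y : ℝ) :
    pd1 (pd2 f) x y = pd2 (pd1 f) x y := by
  set f'' := fderiv ℝ (fderiv ℝ (uncurry f)) (x, y)
  have hf'' : HasFDerivAt (fderiv ℝ (uncurry f)) f'' (x, y) :=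
    ((hf.fderiv_right (m := 1) (WithTop.coe_le_coe.mpr le_top)).differentiable (by simp)
      (x, y)).hasFDerivAt
  have h₁ : HasDerivAt (fun s => pd2 f s y) (f'' (1, 0) (0, 1)) x := by
    simp only [hf.pd2_eq_fderiv]
    simpa [comp_def] using (hf''.clm_apply (hasFDerivAt_const ((0 : ℝ), (1 : ℝ)) _)).comp_hasDerivAt
      x ((hasDerivAt_id x).prodMk (hasDerivAt_const x y))
  have h₂ : HasDerivAt (fun t => pd1 f x t) (f'' (0, 1) (1, 0)) y := by
    simp only [hf.pd1_eq_fderiv]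
    simpa [comp_def] using (hf''.clm_apply (hasFDerivAt_const ((1 : ℝ), (0 : ℝ)) _)).comp_hasDerivAt
      y ((hasDerivAt_const y x).prodMk (hasDerivAt_id y))
  rw [pd1, pd2, h₁.deriv, h₂.deriv]
  exact hf.contDiffAt.isSymmSndFDerivAt
    (by rw [minSmoothness_of_isRCLikeNormedField]; exact WithTop.coe_le_coe.mpr le_top) _ _

theorem integral_pd2_eq_zero_of_periodic {c : ℝ} (hf : ContDiff ℝ (⊤ : ℕ∞) (uncurry f))
    (hper : ∀ x y, f x (y + c) = f x y) (x : ℝ) :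
    ∫ y in (0 : ℝ)..c, pd2 f x y = 0 := by
  rw [intervalIntegral.integral_eq_sub_of_hasDerivAt (fun y _ => hf.hasDerivAt_pd2 x y)
    ((hf.uncurry_pd2.continuous.uncurry_left x).intervalIntegrable _ _), ← zero_add c, hper,
    sub_self]

end ContDiff

theorem pd1_periodic {f : ℝ → ℝ → ℝ} {c : ℝ} (hf : ∀ x y, f x (y + c) = f x y) (x y : ℝ) :
    pd1 f x (y + c) = pd1 f x y := by
  simp only [pd1, hf]

theorem pd2_periodic {f : ℝ → ℝ → ℝ} {c : ℝ} (hf : ∀ x y, f x (y + c) = f x y) (x y : ℝ) :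
    pd2 f x (y + c) = pd2 f x y := by
  rw [pd2, pd2, ← deriv_comp_add_const]
  simp only [hf]

theorem intervalIntegral_le_of_hasDerivAt_fst {h G : ℝ → ℝ → ℝ} {r₀ r₁ L : ℝ}
    (hr : r₀ ≤ r₁) (hL : 0 ≤ L)
    (hderiv : ∀ s ∈ Icc r₀ r₁, ∀ θ ∈ Icc 0 L, HasDerivAt (fun t => h t θ) (G s θ) s)
    (hG : ContinuousOn (uncurry G) (Icc r₀ r₁ ×ˢ Icc 0 L))
    (hG_int : ∀ s ∈ Icc r₀ r₁, ∫ θ in 0..L, G s θ ≤ 0)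
    (h₀ : IntervalIntegrable (h r₀) volume 0 L) (h₁ : IntervalIntegrable (h r₁) volume 0 L) :
    ∫ θ in 0..L, h r₁ θ ≤ ∫ θ in 0..L, h r₀ θ := by
  have hftc : ∀ θ ∈ uIcc 0 L, h r₁ θ - h r₀ θ = ∫ s in r₀..r₁, G s θ := by
    intro θ hθ
    rw [uIcc_of_le hL] at hθ
    refine (intervalIntegral.integral_eq_sub_of_hasDerivAt
      (fun s hs => hderiv s (uIcc_of_le hr ▸ hs) θ hθ) ?_).symm
    exact (hG.comp (Continuous.prodMk_left θ).continuousOn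
      fun s hs => ⟨hs, hθ⟩).intervalIntegrable_of_Icc hr
  have hswap : ∫ θ in 0..L, ∫ s in r₀..r₁, G s θ = ∫ s in r₀..r₁, ∫ θ in 0..L, G s θ := by
    refine (intervalIntegral_intervalIntegral_swap ?_).symm
    rw [uIoc_of_le hr, uIoc_of_le hL]
    exact (hG.integrableOn_compact (isCompact_Icc.prod isCompact_Icc)).mono_set
      (prod_mono Ioc_subset_Icc_self Ioc_subset_Icc_self)
  rw [← sub_nonpos, ← intervalIntegral.integral_sub h₁ h₀,
    intervalIntegral.integral_congr hftc, hswap]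
  simpa [intervalIntegral.integral_neg] using
    intervalIntegral.integral_nonneg hr fun s hs => neg_nonneg.2 (hG_int s hs)

noncomputable section

def energyDensityK (K : ℝ) (U A η a : ℝ → ℝ → ℝ) (r θ : ℝ) : ℝ :=
  Edens U A a r θ + K ^ 2 / (4 * r ^ 4) * exp (2 * η r θ) * (a r θ)⁻¹

/-- `R² a F`, written out so that it is smooth also across `R = 0`. -/
def arealFlux (U A a : ℝ → ℝ → ℝ) (r θ : ℝ) : ℝ :=
  2 * r ^ 2 * a r θ * pd1 U r θ * pd2 U r θ
    + exp (4 * U r θ) / 2 * a r θ * pd1 A r θ * pd2 A r θ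

def dissipation (K : ℝ) (U A η a : ℝ → ℝ → ℝ) (r θ : ℝ) : ℝ :=
  2 / r * ((a r θ)⁻¹ * (pd1 U r θ) ^ 2
    + exp (4 * U r θ) / (4 * r ^ 2) * a r θ * (pd2 A r θ) ^ 2
    + K ^ 2 / (2 * r ^ 4) * exp (2 * η r θ) * (a r θ)⁻¹)

end

theorem Edens_nonneg {U A a : ℝ → ℝ → ℝ} {r θ : ℝ} (ha : 0 < a r θ) :
    0 ≤ Edens U A a r θ := by
  have h₁ : ∀ x, 0 ≤ (a r θ)⁻¹ * x ^ 2 := fun x => mul_nonneg (inv_nonneg.2 ha.le) (sq_nonneg x)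
  have h₂ : ∀ x, 0 ≤ a r θ * x ^ 2 := fun x => mul_nonneg ha.le (sq_nonneg x)
  unfold Edens
  exact add_nonneg (add_nonneg (h₁ _) (h₂ _))
    (mul_nonneg (by positivity) (add_nonneg (h₁ _) (h₂ _)))

theorem dissipation_nonneg {K : ℝ} {U A η a : ℝ → ℝ → ℝ} {r θ : ℝ} (hr : 0 < r)
    (ha : 0 < a r θ) : 0 ≤ dissipation K U A η a r θ := by
  have ha' := inv_nonneg.2 ha.le
  unfold dissipation
  refine mul_nonneg (by positivity) (add_nonneg (add_nonneg ?_ ?_) ?_)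
  · exact mul_nonneg ha' (sq_nonneg _)
  · exact mul_nonneg (mul_nonneg (by positivity) ha.le) (sq_nonneg _)
  · exact mul_nonneg (by positivity) ha'

theorem contDiff_arealFlux {U A a : ℝ → ℝ → ℝ} (hU : ContDiff ℝ (⊤ : ℕ∞) (uncurry U))
    (hA : ContDiff ℝ (⊤ : ℕ∞) (uncurry A)) (ha : ContDiff ℝ (⊤ : ℕ∞) (uncurry a)) :
    ContDiff ℝ (⊤ : ℕ∞) (uncurry (arealFlux U A a)) := by
  have hU' : ContDiff ℝ (⊤ : ℕ∞) fun p : ℝ × ℝ => U p.1 p.2 := hU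
  have ha' : ContDiff ℝ (⊤ : ℕ∞) fun p : ℝ × ℝ => a p.1 p.2 := ha
  have hU₁ : ContDiff ℝ (⊤ : ℕ∞) fun p : ℝ × ℝ => pd1 U p.1 p.2 := hU.uncurry_pd1
  have hU₂ : ContDiff ℝ (⊤ : ℕ∞) fun p : ℝ × ℝ => pd2 U p.1 p.2 := hU.uncurry_pd2
  have hA₁ : ContDiff ℝ (⊤ : ℕ∞) fun p : ℝ × ℝ => pd1 A p.1 p.2 := hA.uncurry_pd1
  have hA₂ : ContDiff ℝ (⊤ : ℕ∞) fun p : ℝ × ℝ => pd2 A p.1 p.2 := hA.uncurry_pd2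
  unfold uncurry arealFlux
  fun_prop

theorem arealFlux_periodic {U A a : ℝ → ℝ → ℝ} (hU : ∀ r θ, U r (θ + 2 * π) = U r θ)
    (hA : ∀ r θ, A r (θ + 2 * π) = A r θ) (ha : ∀ r θ, a r (θ + 2 * π) = a r θ) (r θ : ℝ) :
    arealFlux U A a r (θ + 2 * π) = arealFlux U A a r θ := by
  simp only [arealFlux, hU, ha, pd1_periodic hU, pd2_periodic hU, pd1_periodic hA,
    pd2_periodic hA]

namespace ArealSol

variable {D : Set ℝ} {K : ℝ} (S : ArealSol D K) {r : ℝ}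

theorem pd1_a (hr : r ∈ D) (θ : ℝ) :
    pd1 S.a r θ = -(K ^ 2 * exp (2 * S.η r θ)) / (2 * r ^ 3) * S.a r θ := by
  have hlog := (S.smooth_a.hasDerivAt_pd1 r θ).log (S.apos r hr θ).ne'
  rw [← S.eq_a r hr θ, show pd1 (fun r' θ' => log (S.a r' θ')) r θ = _ from hlog.deriv,
    div_mul_cancel₀ _ (S.apos r hr θ).ne']

theorem antitoneOn_a (hD : D.OrdConnected) (hpos : D ⊆ Ioi 0) (θ : ℝ) :
    AntitoneOn (fun r => S.a r θ) D := by
  refine antitoneOn_of_deriv_nonpos hD.convex ?_ ?_ fun r hr => ?_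
  · exact (S.smooth_a.continuous.uncurry_right θ).continuousOn
  · exact fun r _ => (S.smooth_a.hasDerivAt_pd1 r θ).differentiableAt.differentiableWithinAt
  · have hr := interior_subset hr
    have : 0 < r := hpos hr
    rw [show deriv (fun r => S.a r θ) r = _ from S.pd1_a hr θ]
    exact mul_nonpos_of_nonpos_of_nonneg (div_nonpos_of_nonpos_of_nonneg
      (neg_nonpos.2 (by positivity)) (by positivity)) (S.apos r hr θ).le

theorem bddAbove_range_a (r : ℝ) : BddAbove (range (S.a r)) :=
  (Periodic.compact_of_continuous (S.periodic_a r) two_pi_pos.ne'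
    (S.smooth_a.continuous.uncurry_left r)).bddAbove

theorem abs_pd1_inv_a_div (hr : r ∈ D) (hr0 : 0 < r) (θ : ℝ) :
    |pd1 (fun r' θ' => (S.a r' θ')⁻¹) r θ| / (2 * r)
      = K ^ 2 / (4 * r ^ 4) * exp (2 * S.η r θ) * (S.a r θ)⁻¹ := by
  have ha := S.apos r hr θ
  have hval : pd1 (fun r' θ' => (S.a r' θ')⁻¹) r θ
      = K ^ 2 * exp (2 * S.η r θ) / (2 * r ^ 3) / S.a r θ := by
    rw [show pd1 (fun r' θ' => (S.a r' θ')⁻¹) r θ = _ from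
      ((S.smooth_a.hasDerivAt_pd1 r θ).inv ha.ne').deriv, S.pd1_a hr]
    field_simp
  rw [hval, abs_of_nonneg (div_nonneg (by positivity) ha.le)]
  field_simp
  ring

theorem eq_U_expanded (hr : r ∈ D) (hr0 : r ≠ 0) (θ : ℝ) :
    2 * r ^ 3 * pd1 (pd1 S.U) r θ + (2 * r ^ 2 + K ^ 2 * exp (2 * S.η r θ)) * pd1 S.U r θ
      - 2 * r ^ 3 * S.a r θ * (pd2 S.a r θ * pd2 S.U r θ + S.a r θ * pd2 (pd2 S.U) r θ)
      = r * exp (4 * S.U r θ) * (pd1 S.A r θ ^ 2 - S.a r θ ^ 2 * pd2 S.A r θ ^ 2) := by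
  have ha := (S.apos r hr θ).ne'
  have h := S.eq_U r hr θ
  rw [show pd1 (fun r' θ' => r' * (S.a r' θ')⁻¹ * pd1 S.U r' θ') r θ = _ from
      (((hasDerivAt_id' r).mul ((S.smooth_a.hasDerivAt_pd1 r θ).inv ha)).mul
        (S.smooth_U.uncurry_pd1.hasDerivAt_pd1 r θ)).deriv,
    show pd2 (fun r' θ' => r' * S.a r' θ' * pd2 S.U r' θ') r θ = _ from
      (((S.smooth_a.hasDerivAt_pd2 r θ).const_mul r).mul
        (S.smooth_U.uncurry_pd2.hasDerivAt_pd2 r θ)).deriv, S.pd1_a hr] at h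
  simp only [Pi.mul_apply, Pi.inv_apply] at h
  field_simp at h
  linear_combination h

theorem eq_A_expanded (hr : r ∈ D) (hr0 : r ≠ 0) (θ : ℝ) :
    2 * r ^ 3 * pd1 (pd1 S.A) r θ + (K ^ 2 * exp (2 * S.η r θ) - 2 * r ^ 2) * pd1 S.A r θ
      - 2 * r ^ 3 * S.a r θ * (pd2 S.a r θ * pd2 S.A r θ + S.a r θ * pd2 (pd2 S.A) r θ)
      = 8 * r ^ 3 * (S.a r θ ^ 2 * pd2 S.U r θ * pd2 S.A r θ - pd1 S.U r θ * pd1 S.A r θ) := by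
  have ha := (S.apos r hr θ).ne'
  have h := S.eq_A r hr θ
  rw [show pd1 (fun r' θ' => r'⁻¹ * (S.a r' θ')⁻¹ * pd1 S.A r' θ') r θ = _ from
      (((hasDerivAt_inv hr0).mul ((S.smooth_a.hasDerivAt_pd1 r θ).inv ha)).mul
        (S.smooth_A.uncurry_pd1.hasDerivAt_pd1 r θ)).deriv,
    show pd2 (fun r' θ' => r'⁻¹ * S.a r' θ' * pd2 S.A r' θ') r θ = _ from
      (((S.smooth_a.hasDerivAt_pd2 r θ).const_mul r⁻¹).mul
        (S.smooth_A.uncurry_pd2.hasDerivAt_pd2 r θ)).deriv, S.pd1_a hr] at h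
  simp only [Pi.mul_apply, Pi.inv_apply] at h
  field_simp at h
  linear_combination h

theorem hasDerivAt_energyDensityK (hr : r ∈ D) (hr0 : r ≠ 0) (θ : ℝ) :
    HasDerivAt (fun s => energyDensityK K S.U S.A S.η S.a s θ)
      (pd2 (arealFlux S.U S.A S.a) r θ / r ^ 2 - dissipation K S.U S.A S.η S.a r θ) r := by
  have ha := (S.apos r hr θ).ne'
  have hU₁ := S.smooth_U.uncurry_pd1
  have hU₂ := S.smooth_U.uncurry_pd2
  have hA₁ := S.smooth_A.uncurry_pd1
  have hA₂ := S.smooth_A.uncurry_pd2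
  have a₁ := S.smooth_a.hasDerivAt_pd1 r θ
  have a₂ := S.smooth_a.hasDerivAt_pd2 r θ
  have hflux : pd2 (arealFlux S.U S.A S.a) r θ = _ :=
    ((((a₂.const_mul (2 * r ^ 2)).mul (hU₁.hasDerivAt_pd2 r θ)).mul
      (hU₂.hasDerivAt_pd2 r θ)).add
    (((((S.smooth_U.hasDerivAt_pd2 r θ).const_mul 4).exp.div_const 2).mul a₂).mul
      (hA₁.hasDerivAt_pd2 r θ) |>.mul (hA₂.hasDerivAt_pd2 r θ))).deriv
  have hdens : HasDerivAt (fun s => energyDensityK K S.U S.A S.η S.a s θ) _ r :=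
    ((((a₁.inv ha).mul ((hU₁.hasDerivAt_pd1 r θ).pow 2)).add
      (a₁.mul ((hU₂.hasDerivAt_pd1 r θ).pow 2))).add
    ((((S.smooth_U.hasDerivAt_pd1 r θ).const_mul 4).exp.div
        (((hasDerivAt_id' r).pow 2).const_mul 4) (by simp [hr0])).mul
      (((a₁.inv ha).mul ((hA₁.hasDerivAt_pd1 r θ).pow 2)).add
        (a₁.mul ((hA₂.hasDerivAt_pd1 r θ).pow 2))))).add
    ((((hasDerivAt_const r (K ^ 2)).div (((hasDerivAt_id' r).pow 4).const_mul 4)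
        (by simp [hr0])).mul ((S.smooth_η.hasDerivAt_pd1 r θ).const_mul 2).exp).mul
      (a₁.inv ha))
  refine hdens.congr_deriv ?_
  have hEqU := S.eq_U_expanded hr hr0 θ
  have hEqA := S.eq_A_expanded hr hr0 θ
  have hηR := S.eq_ηR r hr θ
  simp only [Edens] at hηR
  field_simp at hηR
  rw [hflux, dissipation, S.smooth_U.pd1_pd2_comm, S.smooth_A.pd1_pd2_comm, S.pd1_a hr]
  simp only [Pi.add_apply, Pi.mul_apply, Pi.inv_apply, Pi.pow_apply, Pi.div_apply]
  field_simp
  -- (A1) times `2 U_R / R`, (A2) times `e^{4U} A_R / (2R)` and the `η_R` constraint times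
  -- `K² e^{2η} / (2R⁴ a)`, all rescaled by the common denominator `8 R⁸ a`
  linear_combination (8 * r ^ 5 * pd1 S.U r θ) * hEqU
    + (2 * r ^ 3 * exp (4 * S.U r θ) * pd1 S.A r θ) * hEqA + (r * K ^ 2 * exp (2 * S.η r θ)) * hηR

theorem continuous_energyDensityK (hr : r ∈ D) :
    Continuous (energyDensityK K S.U S.A S.η S.a r) := by
  have hU := S.smooth_U.continuous.uncurry_left r
  have hη := S.smooth_η.continuous.uncurry_left r
  have ha := S.smooth_a.continuous.uncurry_left r
  have hU₁ := S.smooth_U.uncurry_pd1.continuous.uncurry_left r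
  have hU₂ := S.smooth_U.uncurry_pd2.continuous.uncurry_left r
  have hA₁ := S.smooth_A.uncurry_pd1.continuous.uncurry_left r
  have hA₂ := S.smooth_A.uncurry_pd2.continuous.uncurry_left r
  unfold energyDensityK Edens
  fun_prop (disch := exact fun θ => (S.apos r hr θ).ne')

theorem continuousOn_dissipation (hpos : D ⊆ Ioi 0) :
    ContinuousOn (uncurry (dissipation K S.U S.A S.η S.a)) (D ×ˢ univ) := by
  have hU : Continuous fun p : ℝ × ℝ => S.U p.1 p.2 := S.smooth_U.continuous
  have hη : Continuous fun p : ℝ × ℝ => S.η p.1 p.2 := S.smooth_η.continuous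
  have ha : Continuous fun p : ℝ × ℝ => S.a p.1 p.2 := S.smooth_a.continuous
  have hU₁ : Continuous fun p : ℝ × ℝ => pd1 S.U p.1 p.2 := S.smooth_U.uncurry_pd1.continuous
  have hA₂ : Continuous fun p : ℝ × ℝ => pd2 S.A p.1 p.2 := S.smooth_A.uncurry_pd2.continuous
  unfold uncurry dissipation
  fun_prop (disch := (rintro ⟨x, y⟩ ⟨hx, -⟩
                      first | exact (S.apos x hx y).ne' | simp [(mem_Ioi.1 (hpos hx)).ne']))

theorem integral_flux_sub_dissipation_nonpos (hpos : D ⊆ Ioi 0) (hr : r ∈ D) :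
    ∫ θ in (0 : ℝ)..(2 * π),
      (pd2 (arealFlux S.U S.A S.a) r θ / r ^ 2 - dissipation K S.U S.A S.η S.a r θ) ≤ 0 := by
  have hflux := contDiff_arealFlux S.smooth_U S.smooth_A S.smooth_a
  have hdiss : Continuous (dissipation K S.U S.A S.η S.a r) :=
    (S.continuousOn_dissipation hpos).comp_continuous (Continuous.prodMk_right r)
      fun θ => ⟨hr, trivial⟩
  rw [intervalIntegral.integral_sub
      (((hflux.uncurry_pd2.continuous.uncurry_left r).div_const _).intervalIntegrable _ _)
      (hdiss.intervalIntegrable _ _),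
    intervalIntegral.integral_div, hflux.integral_pd2_eq_zero_of_periodic
      (arealFlux_periodic S.periodic_U S.periodic_A S.periodic_a) r,
    zero_div, zero_sub, neg_nonpos]
  exact intervalIntegral.integral_nonneg two_pi_pos.le fun θ _ =>
    dissipation_nonneg (hpos hr) (S.apos r hr θ)

theorem antitoneOn_enK (hD : D.OrdConnected) (hpos : D ⊆ Ioi 0) :
    AntitoneOn (EnK K S.U S.A S.η S.a) D := by
  intro r₀ hr₀ r₁ hr₁ hle
  have hsub : Icc r₀ r₁ ⊆ D := hD.out hr₀ hr₁
  have hflux := (contDiff_arealFlux S.smooth_U S.smooth_A S.smooth_a).uncurry_pd2.continuous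
  refine intervalIntegral_le_of_hasDerivAt_fst hle two_pi_pos.le
    (fun s hs θ _ => S.hasDerivAt_energyDensityK (hsub hs) (hpos (hsub hs)).ne' θ) ?_
    (fun s hs => S.integral_flux_sub_dissipation_nonpos hpos (hsub hs))
    ((S.continuous_energyDensityK hr₀).intervalIntegrable _ _)
    ((S.continuous_energyDensityK hr₁).intervalIntegrable _ _)
  exact (hflux.continuousOn.div (continuous_fst.pow 2).continuousOn
      fun p hp => pow_ne_zero 2 (hpos (hsub hp.1)).ne').sub
    ((S.continuousOn_dissipation hpos).mono (prod_mono hsub (subset_univ _)))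

theorem integral_twist_le_enK (hr : r ∈ D) :
    ∫ θ in (0 : ℝ)..(2 * π), K ^ 2 / (4 * r ^ 4) * exp (2 * S.η r θ) * (S.a r θ)⁻¹
      ≤ EnK K S.U S.A S.η S.a r := by
  have hη := S.smooth_η.continuous.uncurry_left r
  have ha := S.smooth_a.continuous.uncurry_left r
  have htwist : Continuous fun θ => K ^ 2 / (4 * r ^ 4) * exp (2 * S.η r θ) * (S.a r θ)⁻¹ := by
    fun_prop (disch := exact fun θ => (S.apos r hr θ).ne')
  exact intervalIntegral.integral_mono_on two_pi_pos.le (htwist.intervalIntegrable _ _)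
    ((S.continuous_energyDensityK hr).intervalIntegrable _ _)
    fun θ _ => le_add_of_nonneg_left (Edens_nonneg (S.apos r hr θ))

end ArealSol

theorem areal_a_upper_bound_general
    (R₀ Rs K : ℝ) (hR₀ : 0 < R₀)
    (S : ArealSol (Set.Ico R₀ Rs) K) :
    ∀ r ∈ Set.Ico R₀ Rs,
      (∀ θ : ℝ, S.a r θ ≤ ⨆ θ' : ℝ, S.a R₀ θ') ∧
      (1 / (2 * r)) *
          (∫ θ in (0:ℝ)..(2 * Real.pi),
            |pd1 (fun r' θ' => (S.a r' θ')⁻¹) r θ|)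
        ≤ EnK K S.U S.A S.η S.a R₀ := by
  intro r hr
  have hpos : Ico R₀ Rs ⊆ Ioi 0 := fun s hs => hR₀.trans_le hs.1
  have hR₀mem : R₀ ∈ Ico R₀ Rs := ⟨le_rfl, hr.1.trans_lt hr.2⟩
  refine ⟨fun θ => ?_, ?_⟩
  · calc S.a r θ ≤ S.a R₀ θ := S.antitoneOn_a ordConnected_Ico hpos θ hR₀mem hr hr.1
      _ ≤ ⨆ θ', S.a R₀ θ' := le_ciSup (S.bddAbove_range_a R₀) θ
  · calc (1 / (2 * r)) * ∫ θ in (0:ℝ)..(2 * π), |pd1 (fun r' θ' => (S.a r' θ')⁻¹) r θ|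
        = ∫ θ in (0:ℝ)..(2 * π), K ^ 2 / (4 * r ^ 4) * exp (2 * S.η r θ) * (S.a r θ)⁻¹ := by
          rw [one_div_mul_eq_div, ← intervalIntegral.integral_div]
          exact intervalIntegral.integral_congr fun θ _ => S.abs_pd1_inv_a_div hr (hpos hr) θ
      _ ≤ EnK K S.U S.A S.η S.a r := S.integral_twist_le_enK hr
      _ ≤ EnK K S.U S.A S.η S.a R₀ := S.antitoneOn_enK ordConnected_Ico hpos hR₀mem hr hr.1

/-- **Upper bound for the metric coefficient `a`.**
For a smooth areal solution on `[R₀,R*)`: (i) `a(R,θ) ≤ sup a(R₀,·)`; and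
(ii) `(1/(2R)) ∫ |∂_R(1/a)| dθ ≤ 𝓔_K(R₀)`. -/
theorem areal_a_upper_bound
    (R₀ Rs K : ℝ) (hR₀ : 0 < R₀) (hRs : R₀ < Rs)
    (S : ArealSol (Set.Ico R₀ Rs) K) :
    ∀ r ∈ Set.Ico R₀ Rs,
      (∀ θ : ℝ, S.a r θ ≤ ⨆ θ' : ℝ, S.a R₀ θ') ∧
      (1 / (2 * r)) *
          (∫ θ in (0:ℝ)..(2 * Real.pi),
            |pd1 (fun r' θ' => (S.a r' θ')⁻¹) r θ|)
        ≤ EnK K S.U S.A S.η S.a R₀ :=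
  areal_a_upper_bound_general R₀ Rs K hR₀ S
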